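/- For every m ≥ 3 there exists a 3-connected graph G_m having a 2-connected spanning subgraph H_m with γ_g(G_m) ≥ 2m − 2 and γ_g(H_m) = m. -/

import Mathlib

/-!
The vertices come in `m` regions, each a clique consisting of an apex, two hubs and `m` ports;
all hubs together form a clique. This is `H` (`baseGraph`); `G` (`linkedGraph`) additionally joins
the port of region `j` aimed at region `t` to the port of region `t` aimed at `j`. Two hubs per
region make `H` 2-connected, and the ports reconnect a region whose two hubs are deleted, so `G` is
3-connected.

The apex of region `j` is dominated only by moves inside region `j`, so the game lasts at least
`m` moves on both graphs, and on `H` Dominator finishes in `m` moves by opening with a hub. On `G`,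
Staller answers by playing inside regions whose apex is already dominated as long as some such move
is legal. A move dominates at most one port outside its own region, while `(m - u) u` ports would
have to be dominated (`u` being the number of undominated apexes) before Staller runs out of such
moves; this keeps the game going for almost two moves per region.
-/

open Finset

namespace DomGame

variable {V : Type*} [Fintype V] [DecidableEq V]

/-- Closed neighborhood of `v` in `G`, as a `Finset`. -/
noncomputable def cn (G : SimpleGraph V) (v : V) : Finset V :=
  haveI : DecidablePred (fun u : V => u = v ∨ G.Adj v u) := fun _ => Classical.propDecidable _
  Finset.univ.filter (fun u : V => u = v ∨ G.Adj v u)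

/-- Value (number of remaining moves, optimal play) of the domination game on `G`,
with fuel, where `D` is the set of already dominated vertices and `who = true`
means Dominator is to move (minimizing); `who = false` means Staller (maximizing). -/
noncomputable def auxVal (G : SimpleGraph V) : ℕ → Bool → Finset V → ℕ
  | 0, _, _ => 0
  | n + 1, who, D =>
    if D = Finset.univ then 0
    else
      haveI : DecidablePred (fun v : V => ¬ cn G v ⊆ D) := fun _ => Classical.propDecidable _
      let moves : Finset V := Finset.univ.filter (fun v : V => ¬ cn G v ⊆ D)
      if who then
        WithTop.untopD 0 ((moves.image (fun v => 1 + auxVal G n false (D ∪ cn G v))).min)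
      else
        moves.sup (fun v => 1 + auxVal G n true (D ∪ cn G v))

/-- Remaining moves of the domination game on the partially dominated graph `(G, D)`,
Dominator to move, both players optimal. -/
noncomputable def gVal (G : SimpleGraph V) (D : Finset V) : ℕ :=
  auxVal G (Fintype.card V) true D

/-- Remaining moves, Staller to move. -/
noncomputable def gVal' (G : SimpleGraph V) (D : Finset V) : ℕ :=
  auxVal G (Fintype.card V) false D

/-- The game domination number (Dominator starts). -/
noncomputable def gammaG (G : SimpleGraph V) : ℕ := gVal G ∅

/-- The Staller-start game domination number. -/
noncomputable def gammaG' (G : SimpleGraph V) : ℕ := gVal' G ∅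

/-- `S` is a dominating set of `G`. -/
def IsDomSet (G : SimpleGraph V) (S : Finset V) : Prop :=
  ∀ v : V, ∃ u ∈ S, u = v ∨ G.Adj u v

/-- The domination number of `G`. -/
noncomputable def gamma (G : SimpleGraph V) : ℕ :=
  sInf {n | ∃ S : Finset V, IsDomSet G S ∧ S.card = n}

end DomGame

/-- `G` is `k`-connected: it has more than `k` vertices, and deleting any fewer
than `k` vertices leaves a connected graph. -/
def KConn {V : Type*} [Fintype V] [DecidableEq V] (G : SimpleGraph V) (k : ℕ) : Prop :=
  k < Fintype.card V ∧
    ∀ S : Finset V, S.card < k → (G.induce {v : V | v ∉ S}).Connected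

namespace DomGame

variable {V W : Type*} [Fintype V] [Fintype W] {G : SimpleGraph V} {G' : SimpleGraph W}

noncomputable def legalMoves (G : SimpleGraph V) (D : Finset V) : Finset V :=
  haveI : DecidablePred (fun v : V => ¬ cn G v ⊆ D) := fun _ => Classical.propDecidable _
  Finset.univ.filter (fun v : V => ¬ cn G v ⊆ D)

lemma mem_cn {v u : V} : u ∈ cn G v ↔ u = v ∨ G.Adj v u := by
  simp [cn]

lemma self_mem_cn (v : V) : v ∈ cn G v := mem_cn.2 (Or.inl rfl)

lemma mem_legalMoves {D : Finset V} {v : V} : v ∈ legalMoves G D ↔ ¬ cn G v ⊆ D := by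
  simp [legalMoves]

lemma mem_legalMoves_of_notMem {D : Finset V} {v : V} (hv : v ∉ D) : v ∈ legalMoves G D :=
  mem_legalMoves.2 fun h => hv (h (self_mem_cn v))

lemma legalMoves_nonempty {D : Finset V} (hD : D ≠ univ) : (legalMoves G D).Nonempty := by
  obtain ⟨v, hv⟩ : ∃ v, v ∉ D := by simpa [Finset.eq_univ_iff_forall] using hD
  exact ⟨v, mem_legalMoves_of_notMem hv⟩

lemma cn_iso (φ : G ≃g G') (v : V) : cn G' (φ v) = (cn G v).map φ.toEquiv.toEmbedding := by
  ext w
  obtain ⟨u, rfl⟩ := φ.surjective w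
  rw [show φ u = φ.toEquiv.toEmbedding u from rfl, Finset.mem_map']
  simp [mem_cn, φ.map_adj_iff]

lemma legalMoves_iso (φ : G ≃g G') (D : Finset V) :
    legalMoves G' (D.map φ.toEquiv.toEmbedding) = (legalMoves G D).map φ.toEquiv.toEmbedding := by
  ext w
  obtain ⟨u, rfl⟩ := φ.surjective w
  rw [show φ u = φ.toEquiv.toEmbedding u from rfl, Finset.mem_map', mem_legalMoves,
    mem_legalMoves, ← Finset.map_subset_map (f := φ.toEquiv.toEmbedding), ← cn_iso]
  rfl

variable [DecidableEq V]

lemma auxVal_univ (n : ℕ) (who : Bool) : auxVal G n who univ = 0 := by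
  cases n <;> simp [auxVal]

lemma auxVal_succ_true {n : ℕ} {D : Finset V} (hD : D ≠ univ) :
    auxVal G (n + 1) true D =
      WithTop.untopD 0
        (((legalMoves G D).image fun v => 1 + auxVal G n false (D ∪ cn G v)).min) := by
  simp [auxVal, hD, legalMoves]

lemma auxVal_succ_false {n : ℕ} {D : Finset V} (hD : D ≠ univ) :
    auxVal G (n + 1) false D =
      (legalMoves G D).sup fun v => 1 + auxVal G n true (D ∪ cn G v) := by
  simp [auxVal, hD, legalMoves]

lemma auxVal_succ_true_le {n : ℕ} {D : Finset V} (hD : D ≠ univ) {v : V}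
    (hv : v ∈ legalMoves G D) :
    auxVal G (n + 1) true D ≤ 1 + auxVal G n false (D ∪ cn G v) := by
  rw [auxVal_succ_true hD]
  obtain ⟨a, ha⟩ := Finset.min_of_mem (Finset.mem_image_of_mem
    (fun v => 1 + auxVal G n false (D ∪ cn G v)) hv)
  rw [ha, WithTop.untopD_coe]
  exact WithTop.coe_le_coe.1 (ha ▸ Finset.min_le (Finset.mem_image_of_mem _ hv))

lemma le_auxVal_succ_true {n t : ℕ} {D : Finset V} (hD : D ≠ univ)
    (h : ∀ v ∈ legalMoves G D, t ≤ 1 + auxVal G n false (D ∪ cn G v)) :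
    t ≤ auxVal G (n + 1) true D := by
  rw [auxVal_succ_true hD]
  obtain ⟨a, ha⟩ := Finset.min_of_nonempty ((legalMoves_nonempty hD).image
    fun v => 1 + auxVal G n false (D ∪ cn G v))
  obtain ⟨v, hv, rfl⟩ := Finset.mem_image.1 (Finset.mem_of_min ha)
  rw [ha, WithTop.untopD_coe]
  exact h v hv

lemma le_auxVal_succ_false {n : ℕ} {D : Finset V} (hD : D ≠ univ) {v : V}
    (hv : v ∈ legalMoves G D) :
    1 + auxVal G n true (D ∪ cn G v) ≤ auxVal G (n + 1) false D := by
  rw [auxVal_succ_false hD]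
  exact Finset.le_sup (f := fun v => 1 + auxVal G n true (D ∪ cn G v)) hv

lemma auxVal_succ_false_le {n t : ℕ} {D : Finset V} (hD : D ≠ univ)
    (h : ∀ v ∈ legalMoves G D, 1 + auxVal G n true (D ∪ cn G v) ≤ t) :
    auxVal G (n + 1) false D ≤ t := by
  rw [auxVal_succ_false hD]
  exact Finset.sup_le h

variable [DecidableEq W]

lemma auxVal_iso (φ : G ≃g G') (n : ℕ) (who : Bool) (D : Finset V) :
    auxVal G' n who (D.map φ.toEquiv.toEmbedding) = auxVal G n who D := by
  induction n generalizing who D with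
  | zero => simp [auxVal]
  | succ n ih =>
    by_cases hD : D = univ
    · subst hD
      rw [Finset.map_univ_equiv, auxVal_univ, auxVal_univ]
    have hD' : D.map φ.toEquiv.toEmbedding ≠ univ := by
      rwa [Ne, ← Finset.map_univ_equiv φ.toEquiv, Finset.map_inj]
    have hstep (v : V) : D.map φ.toEquiv.toEmbedding ∪ cn G' (φ v) =
        (D ∪ cn G v).map φ.toEquiv.toEmbedding := by
      rw [cn_iso, Finset.map_union]
    cases who
    · simp only [auxVal_succ_false hD, auxVal_succ_false hD', legalMoves_iso, Finset.sup_map]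
      exact Finset.sup_congr rfl fun v _ => by simp [hstep, ih]
    · rw [auxVal_succ_true hD, auxVal_succ_true hD', legalMoves_iso,
        Finset.map_eq_image _ (legalMoves G D), Finset.image_image]
      congr 2
      exact Finset.image_congr fun v _ => by simp [hstep, ih]

lemma gammaG_iso (φ : G ≃g G') : gammaG G' = gammaG G := by
  simpa [gammaG, gVal, Fintype.card_congr φ.toEquiv] using auxVal_iso φ (Fintype.card V) true ∅

end DomGame

lemma KConn.of_iso {V W : Type*} [Fintype V] [DecidableEq V] [Fintype W] [DecidableEq W]
    {G : SimpleGraph V} {G' : SimpleGraph W} (φ : G ≃g G') {k : ℕ} (h : KConn G k) :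
    KConn G' k := by
  refine ⟨Fintype.card_congr φ.toEquiv ▸ h.1, fun S' hS' => ?_⟩
  let S := S'.map φ.symm.toEquiv.toEmbedding
  have hS (v : V) : v ∈ S ↔ φ v ∈ S' := by simp [S, Finset.mem_map_equiv]; rfl
  have hconn := h.2 S (by simpa [S] using hS')
  let f : G.induce {v | v ∉ S} →g G'.induce {w | w ∉ S'} :=
    ⟨fun x => ⟨φ x, (hS x).not.1 x.2⟩, fun hab => φ.map_adj_iff.2 hab⟩
  refine hconn.map f fun w => ⟨⟨φ.symm w, (hS _).not.2 ?_⟩, ?_⟩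
  · rw [φ.apply_symm_apply]; exact w.2
  · exact Subtype.ext (φ.apply_symm_apply w)

lemma SimpleGraph.reachable_induce_of_eq_or_adj {V : Type*} {G : SimpleGraph V} {s : Set V}
    {x y : V} (hx : x ∈ s) (hy : y ∈ s) (h : x = y ∨ G.Adj x y) :
    (G.induce s).Reachable ⟨x, hx⟩ ⟨y, hy⟩ := by
  rcases h with rfl | h
  · rfl
  · exact SimpleGraph.Adj.reachable (G := G.induce s) h

namespace PortGraph

open DomGame

/-- Vertex `(j, r)` lies in region `j`; its role `r` is `inl 0` for the apex, `inl 1`, `inl 2`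
for the hubs and `inr t` for the port aimed at region `t` (the port `inr j` of region `j` has no
partner). -/
abbrev Vert (m : ℕ) := Fin m × (Fin 3 ⊕ Fin m)

variable {m : ℕ}

def apex (j : Fin m) : Vert m := (j, .inl 0)

def IsHub (v : Vert m) : Prop := v.2 = .inl 1 ∨ v.2 = .inl 2

instance : DecidablePred (IsHub (m := m)) := fun _ => inferInstanceAs (Decidable (_ ∨ _))

def baseGraph (m : ℕ) : SimpleGraph (Vert m) where
  Adj u v := u ≠ v ∧ (u.1 = v.1 ∨ IsHub u ∧ IsHub v)
  symm := ⟨fun _ _ h => ⟨h.1.symm, h.2.imp Eq.symm And.symm⟩⟩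
  loopless := ⟨fun _ h => h.1 rfl⟩

def linkedGraph (m : ℕ) : SimpleGraph (Vert m) where
  Adj u v := u ≠ v ∧ (u.1 = v.1 ∨ IsHub u ∧ IsHub v ∨ u.2 = .inr v.1 ∧ v.2 = .inr u.1)
  symm := ⟨fun _ _ h => ⟨h.1.symm, h.2.imp Eq.symm (Or.imp And.symm And.symm)⟩⟩
  loopless := ⟨fun _ h => h.1 rfl⟩

lemma baseGraph_le_linkedGraph : baseGraph m ≤ linkedGraph m :=
  fun _ _ h => ⟨h.1, h.2.imp_right Or.inl⟩

lemma mem_cn_baseGraph {v x : Vert m} :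
    x ∈ cn (baseGraph m) v ↔ x.1 = v.1 ∨ IsHub v ∧ IsHub x := by
  rw [mem_cn]
  by_cases hx : x = v
  · simp [hx]
  · simp [baseGraph, hx, Ne.symm hx, eq_comm]

lemma mem_cn_linkedGraph {v x : Vert m} :
    x ∈ cn (linkedGraph m) v ↔
      x.1 = v.1 ∨ IsHub v ∧ IsHub x ∨ v.2 = .inr x.1 ∧ x.2 = .inr v.1 := by
  rw [mem_cn]
  by_cases hx : x = v
  · simp [hx]
  · simp [linkedGraph, hx, Ne.symm hx, eq_comm]

lemma card_vert (m : ℕ) : Fintype.card (Vert m) = m * (m + 3) := by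
  simp [add_comm]

def aliveRegions (D : Finset (Vert m)) : Finset (Fin m) := univ.filter fun j => apex j ∉ D

lemma aliveRegions_empty : aliveRegions (∅ : Finset (Vert m)) = univ := by
  simp [aliveRegions]

lemma aliveRegions_univ : aliveRegions (univ : Finset (Vert m)) = ∅ := by
  simp [aliveRegions]

lemma aliveRegions_union_cn_baseGraph (D : Finset (Vert m)) (v : Vert m) :
    aliveRegions (D ∪ cn (baseGraph m) v) = (aliveRegions D).erase v.1 := by
  ext j
  simp only [aliveRegions, mem_filter, mem_univ, true_and, mem_erase, mem_union, mem_cn_baseGraph]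
  simp [apex, IsHub, and_comm]

lemma aliveRegions_union_cn_linkedGraph (D : Finset (Vert m)) (v : Vert m) :
    aliveRegions (D ∪ cn (linkedGraph m) v) = (aliveRegions D).erase v.1 := by
  ext j
  simp only [aliveRegions, mem_filter, mem_univ, true_and, mem_erase, mem_union, mem_cn_linkedGraph]
  simp [apex, IsHub, and_comm]

lemma min_card_aliveRegions_le_auxVal_baseGraph (n : ℕ) (who : Bool) (D : Finset (Vert m)) :
    min n #(aliveRegions D) ≤ auxVal (baseGraph m) n who D := by
  induction n generalizing who D with
  | zero => simp
  | succ n ih =>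
    by_cases hD : D = univ
    · simp [hD, aliveRegions_univ]
    have hstep (v : Vert m) :
        #(aliveRegions D) - 1 ≤ #(aliveRegions (D ∪ cn (baseGraph m) v)) := by
      rw [aliveRegions_union_cn_baseGraph]
      exact pred_card_le_card_erase
    cases who
    · obtain ⟨v, hv⟩ := legalMoves_nonempty (G := baseGraph m) hD
      have := ih true (D ∪ cn (baseGraph m) v)
      have := hstep v
      have := le_auxVal_succ_false (n := n) hD hv
      omega
    · refine le_auxVal_succ_true hD fun v _ => ?_
      have := ih false (D ∪ cn (baseGraph m) v)
      have := hstep v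
      omega

def coverOutside (S : Finset (Fin m)) : Finset (Vert m) :=
  univ.filter fun x => x.1 ∉ S ∨ IsHub x

lemma coverOutside_union_cn (S : Finset (Fin m)) (v : Vert m) :
    coverOutside S ∪ cn (baseGraph m) v = coverOutside (S.erase v.1) := by
  ext x
  simp only [coverOutside, mem_union, mem_filter, mem_univ, true_and, mem_cn_baseGraph, mem_erase]
  tauto

lemma auxVal_baseGraph_coverOutside_le (n : ℕ) (who : Bool) (S : Finset (Fin m)) :
    auxVal (baseGraph m) n who (coverOutside S) ≤ S.card := by
  induction n generalizing who S with
  | zero => simp [auxVal]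
  | succ n ih =>
    obtain rfl | ⟨j, hj⟩ := S.eq_empty_or_nonempty
    · simp [coverOutside, auxVal_univ]
    have hjD : apex j ∉ coverOutside S := by
      simp only [coverOutside, mem_filter]
      simp [apex, IsHub, hj]
    have hD : coverOutside S ≠ univ := fun h => hjD (h ▸ mem_univ _)
    have hmove {v : Vert m} (hv : v ∈ legalMoves (baseGraph m) (coverOutside S)) : v.1 ∈ S := by
      by_contra h
      refine mem_legalMoves.1 hv fun x hx => ?_
      have := coverOutside_union_cn S v ▸ mem_union_right _ hx
      rwa [Finset.erase_eq_of_notMem h] at this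
    have hstep (v : Vert m) (hv : v ∈ legalMoves (baseGraph m) (coverOutside S)) (who : Bool) :
        1 + auxVal (baseGraph m) n who (coverOutside S ∪ cn (baseGraph m) v) ≤ S.card := by
      rw [coverOutside_union_cn]
      have := ih who (S.erase v.1)
      have := Finset.card_erase_add_one (hmove hv)
      omega
    cases who
    · exact auxVal_succ_false_le hD fun v hv => hstep v hv true
    · have hv := mem_legalMoves_of_notMem (G := baseGraph m) hjD
      exact (auxVal_succ_true_le hD hv).trans (hstep _ hv false)

theorem gammaG_baseGraph (hm : 0 < m) : gammaG (baseGraph m) = m := by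
  have hcard : m ≤ Fintype.card (Vert m) := card_vert m ▸ Nat.le_mul_of_pos_right m (by omega)
  refine le_antisymm ?_ ?_
  · let j : Fin m := ⟨0, hm⟩
    let b : Vert m := (j, .inl 1)
    obtain ⟨N, hN⟩ : ∃ N, Fintype.card (Vert m) = N + 1 :=
      ⟨_, (Nat.succ_pred_eq_of_pos (hm.trans_le hcard)).symm⟩
    have hfirst : ∅ ∪ cn (baseGraph m) b = coverOutside (univ.erase j) := by
      ext x
      simp [b, coverOutside, mem_cn_baseGraph, IsHub]
    calc gammaG (baseGraph m) = auxVal (baseGraph m) (N + 1) true ∅ := by rw [gammaG, gVal, hN]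
      _ ≤ 1 + auxVal (baseGraph m) N false (coverOutside (univ.erase j)) :=
        hfirst ▸ auxVal_succ_true_le (fun h => notMem_empty b (h ▸ mem_univ b : b ∈ ∅))
          (mem_legalMoves_of_notMem (notMem_empty b))
      _ ≤ 1 + #(univ.erase j) := by grw [auxVal_baseGraph_coverOutside_le]
      _ = m := by rw [card_erase_of_mem (mem_univ j), card_univ, Fintype.card_fin]; omega
  · have := min_card_aliveRegions_le_auxVal_baseGraph (Fintype.card (Vert m)) true
      (∅ : Finset (Vert m))
    rwa [aliveRegions_empty, card_univ, Fintype.card_fin, min_eq_right hcard] at this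

def dominatedAlivePorts (D : Finset (Vert m)) : Finset (Vert m) :=
  D.filter fun w => w.2.isRight ∧ w.1 ∈ aliveRegions D

lemma card_dominatedAlivePorts_union_cn_le (D : Finset (Vert m)) (v : Vert m) :
    #(dominatedAlivePorts (D ∪ cn (linkedGraph m) v)) ≤ #(dominatedAlivePorts D) + 1 := by
  set cross := (cn (linkedGraph m) v).filter fun x => x.1 ≠ v.1 ∧ x.2.isRight
  have hsub :
      dominatedAlivePorts (D ∪ cn (linkedGraph m) v) ⊆ dominatedAlivePorts D ∪ cross := by
    intro w
    simp only [dominatedAlivePorts, cross, aliveRegions_union_cn_linkedGraph, mem_filter,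
      mem_union, mem_erase]
    tauto
  have hpartner {x : Vert m} (hx : x ∈ cross) : v.2 = .inr x.1 ∧ x.2 = .inr v.1 := by
    simp only [cross, mem_filter, mem_cn_linkedGraph] at hx
    obtain ⟨h | ⟨-, h⟩ | h, hne, hport⟩ := hx
    · exact absurd h hne
    · rcases h with h | h <;> simp [h] at hport
    · exact h
  have hcross : #cross ≤ 1 := by
    refine card_le_one.2 fun x hx y hy => ?_
    obtain ⟨hvx, hx⟩ := hpartner hx
    obtain ⟨hvy, hy⟩ := hpartner hy
    exact Prod.ext (Sum.inr_injective (hvx.symm.trans hvy)) (hx.trans hy.symm)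
  calc #(dominatedAlivePorts (D ∪ cn (linkedGraph m) v))
      ≤ #(dominatedAlivePorts D ∪ cross) := card_le_card hsub
    _ ≤ #(dominatedAlivePorts D) + 1 := (card_union_le _ _).trans (by omega)

lemma dominatedAlivePorts_union_cn_apex_subset (D : Finset (Vert m)) (j : Fin m) :
    dominatedAlivePorts (D ∪ cn (linkedGraph m) (apex j)) ⊆ dominatedAlivePorts D := by
  intro w
  simp only [dominatedAlivePorts, aliveRegions_union_cn_linkedGraph, mem_filter, mem_union,
    mem_erase, mem_cn_linkedGraph]
  simp only [apex, IsHub]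
  aesop

lemma exists_legalMove_notMem_aliveRegions (D : Finset (Vert m))
    (h : #(dominatedAlivePorts D) < (m - #(aliveRegions D)) * #(aliveRegions D)) :
    ∃ v ∈ legalMoves (linkedGraph m) D, v.1 ∉ aliveRegions D := by
  by_contra! hc
  refine h.not_ge ?_
  have hdead : #(aliveRegions D)ᶜ = m - #(aliveRegions D) := by simp [card_compl]
  rw [← hdead, ← card_product]
  refine card_le_card_of_injOn (fun p => (p.2, .inr p.1)) (fun ⟨j, t⟩ hp => ?_) ?_
  · simp only [coe_product, Set.mem_prod, mem_coe, mem_compl] at hp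
    have hport : cn (linkedGraph m) (j, .inr t) ⊆ D := by
      by_contra hleg
      exact hp.1 (hc _ (mem_legalMoves.2 hleg))
    have hmem : (t, .inr j) ∈ D := hport (mem_cn_linkedGraph.2 (by simp))
    simp [dominatedAlivePorts, hmem, hp.2]
  · rintro ⟨j, t⟩ _ ⟨j', t'⟩ _ h
    simp_all

/-- While `c < (m - u) u` (`u` undominated apexes, `c` dominated ports in their regions) Staller
can move inside a finished region, and `2 (m - u) ≤ (m - u) u` once `u ≥ 2`; so only the ports
beyond `2 (m - u)` are charged against the target of two moves per remaining region;
`stallerBound` is the analogous bound with Staller to move. -/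
def dominatorBound (D : Finset (Vert m)) : ℕ :=
  max #(aliveRegions D)
    (2 * #(aliveRegions D) - 2 - (#(dominatedAlivePorts D) - 2 * (m - #(aliveRegions D))))

def stallerBound (D : Finset (Vert m)) : ℕ :=
  max #(aliveRegions D)
    (2 * #(aliveRegions D) - 1 - (#(dominatedAlivePorts D) - (2 * (m - #(aliveRegions D)) - 1)))

lemma card_aliveRegions_le (D : Finset (Vert m)) : #(aliveRegions D) ≤ m :=
  (card_le_univ _).trans_eq (Fintype.card_fin m)

lemma dominatorBound_le_auxVal_succ {n : ℕ}
    (ih : ∀ D : Finset (Vert m), 0 < #(aliveRegions D) → #(aliveRegions D) < m →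
      min n (stallerBound D) ≤ auxVal (linkedGraph m) n false D)
    (D : Finset (Vert m)) :
    min (n + 1) (dominatorBound D) ≤ auxVal (linkedGraph m) (n + 1) true D := by
  by_cases hD : D = univ
  · simp [hD, dominatorBound, aliveRegions_univ]
  refine le_auxVal_succ_true hD fun v _ => ?_
  have hc := card_dominatedAlivePorts_union_cn_le D v
  have hu := card_aliveRegions_le D
  have hu' := congrArg card (aliveRegions_union_cn_linkedGraph D v)
  unfold dominatorBound
  by_cases hv : v.1 ∈ aliveRegions D
  · rw [card_erase_of_mem hv] at hu'
    have := card_pos.2 ⟨_, hv⟩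
    by_cases hu1 : #(aliveRegions D) = 1
    · omega
    have := ih (D ∪ cn (linkedGraph m) v) (by omega) (by omega)
    unfold stallerBound at this
    omega
  · rw [erase_eq_of_notMem hv] at hu'
    have : #(aliveRegions D) < m := (card_lt_univ_of_notMem hv).trans_eq (Fintype.card_fin m)
    by_cases hu0 : #(aliveRegions D) = 0
    · omega
    have := ih (D ∪ cn (linkedGraph m) v) (by omega) (by omega)
    unfold stallerBound at this
    omega

lemma stallerBound_le_auxVal_succ {n : ℕ}
    (ih : ∀ D : Finset (Vert m), min n (dominatorBound D) ≤ auxVal (linkedGraph m) n true D)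
    (D : Finset (Vert m)) (hpos : 0 < #(aliveRegions D)) (hlt : #(aliveRegions D) < m) :
    min (n + 1) (stallerBound D) ≤ auxVal (linkedGraph m) (n + 1) false D := by
  obtain ⟨j, hj⟩ := card_pos.1 hpos
  have hjD : apex j ∉ D := (mem_filter.1 hj).2
  have hD : D ≠ univ := fun h => hjD (h ▸ mem_univ _)
  unfold stallerBound
  by_cases hwaste : #(dominatedAlivePorts D) < (m - #(aliveRegions D)) * #(aliveRegions D)
  · obtain ⟨v, hv, hdead⟩ := exists_legalMove_notMem_aliveRegions D hwaste
    refine le_trans ?_ (le_auxVal_succ_false hD hv)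
    have hc := card_dominatedAlivePorts_union_cn_le D v
    have hu' := congrArg card (aliveRegions_union_cn_linkedGraph D v)
    rw [erase_eq_of_notMem hdead] at hu'
    have := ih (D ∪ cn (linkedGraph m) v)
    unfold dominatorBound at this
    omega
  · refine le_trans ?_ (le_auxVal_succ_false hD (mem_legalMoves_of_notMem hjD))
    have hc := card_le_card (dominatedAlivePorts_union_cn_apex_subset D j)
    have hu' := congrArg card (aliveRegions_union_cn_linkedGraph D (apex j))
    rw [card_erase_of_mem (s := aliveRegions D) (a := (apex j).1) hj] at hu'
    have hk (k : ℕ) (hk : k ≤ #(aliveRegions D)) :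
        k * (m - #(aliveRegions D)) ≤ #(dominatedAlivePorts D) :=
      (Nat.mul_le_mul_right _ hk).trans (by rw [mul_comm]; omega)
    have := hk 2
    have := hk 3
    have := ih (D ∪ cn (linkedGraph m) (apex j))
    unfold dominatorBound at this
    omega

theorem le_auxVal_linkedGraph (n : ℕ) :
    (∀ D : Finset (Vert m), min n (dominatorBound D) ≤ auxVal (linkedGraph m) n true D) ∧
    (∀ D : Finset (Vert m), 0 < #(aliveRegions D) → #(aliveRegions D) < m →
      min n (stallerBound D) ≤ auxVal (linkedGraph m) n false D) := by
  induction n with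
  | zero => simp
  | succ n ih => exact ⟨dominatorBound_le_auxVal_succ ih.2, stallerBound_le_auxVal_succ ih.1⟩

variable (m) in
theorem le_gammaG_linkedGraph : 2 * m - 2 ≤ gammaG (linkedGraph m) := by
  have h := (le_auxVal_linkedGraph (m := m) (Fintype.card (Vert m))).1 ∅
  simp only [dominatorBound, dominatedAlivePorts, aliveRegions_empty, card_univ,
    Fintype.card_fin, filter_empty, card_empty, card_vert] at h
  have : 2 * m ≤ m * (m + 3) := by nlinarith
  rw [gammaG, gVal, card_vert]
  omega

variable {G : SimpleGraph (Vert m)}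

lemma eq_or_adj_of_fst_eq (hG : baseGraph m ≤ G) {x y : Vert m} (h : x.1 = y.1) :
    x = y ∨ G.Adj x y :=
  (eq_or_ne x y).imp_right fun hne => hG ⟨hne, Or.inl h⟩

lemma eq_or_adj_of_isHub (hG : baseGraph m ≤ G) {x y : Vert m} (hx : IsHub x) (hy : IsHub y) :
    x = y ∨ G.Adj x y :=
  (eq_or_ne x y).imp_right fun hne => hG ⟨hne, Or.inr ⟨hx, hy⟩⟩

lemma induce_connected_of_exists_reachable_hub (hG : baseGraph m ≤ G) {S : Finset (Vert m)}
    (hS : #S < m) (hreach : ∀ x : {v | v ∉ S}, ∃ y : {v | v ∉ S},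
      IsHub y.1 ∧ (G.induce {v | v ∉ S}).Reachable x y) :
    (G.induce {v | v ∉ S}).Connected := by
  let hubs : Finset (Vert m) := univ.image fun j => (j, .inl 1)
  have hcard : #hubs = m := by
    rw [card_image_of_injective _ fun j k h => congrArg Prod.fst h, card_univ, Fintype.card_fin]
  obtain ⟨b, hb, hbS⟩ := exists_mem_notMem_of_card_lt_card (hS.trans_eq hcard.symm)
  have hbhub : IsHub b := by
    obtain ⟨j, -, rfl⟩ := mem_image.1 hb
    exact Or.inl rfl
  refine (SimpleGraph.connected_iff_exists_forall_reachable _).2 ⟨⟨b, hbS⟩, fun x => ?_⟩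
  obtain ⟨y, hy, hxy⟩ := hreach x
  exact (SimpleGraph.reachable_induce_of_eq_or_adj hbS y.2
    (eq_or_adj_of_isHub hG hbhub hy)).trans hxy.symm

lemma exists_reachable_hub_of_regionHub_notMem (hG : baseGraph m ≤ G) {S : Finset (Vert m)}
    (x : {v | v ∉ S}) {i : Fin 3} (hi : IsHub (x.1.1, .inl i)) (hiS : (x.1.1, .inl i) ∉ S) :
    ∃ y : {v | v ∉ S}, IsHub y.1 ∧ (G.induce {v | v ∉ S}).Reachable x y :=
  ⟨⟨_, hiS⟩, hi,
    SimpleGraph.reachable_induce_of_eq_or_adj x.2 hiS (eq_or_adj_of_fst_eq hG rfl)⟩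

lemma regionHubs_subset_of_mem {S : Finset (Vert m)} {j : Fin m} (h₁ : (j, .inl 1) ∈ S)
    (h₂ : (j, .inl 2) ∈ S) : ({(j, .inl 1), (j, .inl 2)} : Finset (Vert m)) ⊆ S :=
  insert_subset h₁ (singleton_subset_iff.2 h₂)

lemma card_regionHubs (j : Fin m) : #({(j, .inl 1), (j, .inl 2)} : Finset (Vert m)) = 2 :=
  card_pair (by simp)

theorem kConn_baseGraph (hm : 2 ≤ m) : KConn (baseGraph m) 2 := by
  refine ⟨by rw [card_vert]; nlinarith, fun S hS => ?_⟩
  refine induce_connected_of_exists_reachable_hub le_rfl (by omega) fun x => ?_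
  by_cases h₁ : (x.1.1, .inl 1) ∈ S
  · have h₂ : (x.1.1, .inl 2) ∉ S := fun h₂ => by
      have := card_le_card (regionHubs_subset_of_mem h₁ h₂)
      rw [card_regionHubs] at this
      omega
    exact exists_reachable_hub_of_regionHub_notMem le_rfl x (Or.inr rfl) h₂
  · exact exists_reachable_hub_of_regionHub_notMem le_rfl x (Or.inl rfl) h₁

theorem kConn_linkedGraph (hm : 3 ≤ m) : KConn (linkedGraph m) 3 := by
  have hG := baseGraph_le_linkedGraph (m := m)
  refine ⟨by rw [card_vert]; nlinarith, fun S hS => ?_⟩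
  refine induce_connected_of_exists_reachable_hub hG (by omega) fun x => ?_
  obtain ⟨⟨j, r⟩, hx⟩ := x
  by_cases h₁ : (j, .inl 1) ∈ S
  · by_cases h₂ : (j, .inl 2) ∈ S
    · have hSeq := eq_of_subset_of_card_le (regionHubs_subset_of_mem h₁ h₂)
        (by rw [card_regionHubs]; omega)
      have hout {v : Vert m} (hv : v.2.isRight ∨ v.1 ≠ j) : v ∉ S := by
        rw [← hSeq]
        obtain ⟨v1, _ | _⟩ := v
        · simp only [Sum.isRight_inl, Bool.false_eq_true, false_or] at hv
          simp [hv]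
        · simp
      have : Nontrivial (Fin m) := Fin.nontrivial_iff_two_le.2 (by omega)
      obtain ⟨k, hk⟩ := exists_ne j
      have hp : ((j, .inr k) : Vert m) ∉ S := hout (Or.inl rfl)
      have hq : ((k, .inr j) : Vert m) ∉ S := hout (Or.inr hk)
      have hh : ((k, .inl 1) : Vert m) ∉ S := hout (Or.inr hk)
      refine ⟨⟨_, hh⟩, Or.inl rfl, ?_⟩
      have hpq : (linkedGraph m).Adj (j, .inr k) (k, .inr j) :=
        ⟨fun h => hk (congrArg Prod.fst h).symm, Or.inr (Or.inr ⟨rfl, rfl⟩)⟩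
      exact ((SimpleGraph.reachable_induce_of_eq_or_adj hx hp (eq_or_adj_of_fst_eq hG rfl)).trans
        (SimpleGraph.reachable_induce_of_eq_or_adj hp hq (Or.inr hpq))).trans
        (SimpleGraph.reachable_induce_of_eq_or_adj hq hh (eq_or_adj_of_fst_eq hG rfl))
    · exact exists_reachable_hub_of_regionHub_notMem hG ⟨_, hx⟩ (Or.inr rfl) h₂
  · exact exists_reachable_hub_of_regionHub_notMem hG ⟨_, hx⟩ (Or.inl rfl) h₁

end PortGraph

/-- for m ≥ 3 there is a 3-connected graph G with a 2-connected
spanning subgraph H such that γ_g(G) ≥ 2m − 2 and γ_g(H) = m. -/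
theorem stmt14 (m : ℕ) (hm : 3 ≤ m) :
    ∃ (n : ℕ) (G H : SimpleGraph (Fin n)), H ≤ G ∧ KConn G 3 ∧ KConn H 2 ∧
      2 * m - 2 ≤ DomGame.gammaG G ∧ DomGame.gammaG H = m := by
  let e : PortGraph.Vert m ≃ Fin (m * (m + 3)) := Fintype.equivFinOfCardEq (PortGraph.card_vert m)
  let φG := SimpleGraph.Iso.map e (PortGraph.linkedGraph m)
  let φH := SimpleGraph.Iso.map e (PortGraph.baseGraph m)
  refine ⟨_, _, _, SimpleGraph.map_monotone _ PortGraph.baseGraph_le_linkedGraph,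
    (PortGraph.kConn_linkedGraph hm).of_iso φG, (PortGraph.kConn_baseGraph (by omega)).of_iso φH,
    ?_, ?_⟩
  · rw [DomGame.gammaG_iso φG]
    exact PortGraph.le_gammaG_linkedGraph m
  · rw [DomGame.gammaG_iso φH]
    exact PortGraph.gammaG_baseGraph (by omega)
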